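/- Let d ≥ 1, k ≥ 2, C > 0 and Δ̄ ∈ (0,1). Define ŝ : ℝ^d → ℝ by ŝ(w) = (2π)^{-d/2} e^{-Δ̄²‖w‖²/2} if ‖w‖₂ ≤ (√(C ln k) + √d)/Δ̄ and ŝ(w) = 0 otherwise, and let s be the inverse Fourier transform of ŝ. Then for all z ∈ ℝ^d, |s(z) − γ_{Δ̄}(z)| ≤ (2πΔ̄²)^{-d/2}·k^{-C/2}. -/

import Mathlib

open MeasureTheory Real
open scoped RealInnerProductSpace

/-- The density of the centered spherical Gaussian on `ℝ^d` whose one-dimensional marginals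
have variance `σ²`: `γ_σ(z) = (2πσ²)^(-d/2) exp(-‖z‖²/(2σ²))`. -/
noncomputable def gaussDensity (d : ℕ) (σ : ℝ) (z : EuclideanSpace ℝ (Fin d)) : ℝ :=
  (2 * π * σ ^ 2) ^ (-(d : ℝ) / 2) * Real.exp (-‖z‖ ^ 2 / (2 * σ ^ 2))

/-- `ŝ(w) = (2π)^(-d/2) e^(-Δ̄²‖w‖²/2)` on the ball `‖w‖ ≤ (√(C ln k)+√d)/Δ̄`, and `0` outside. -/
noncomputable def sHat (d k : ℕ) (C Δ : ℝ) (w : EuclideanSpace ℝ (Fin d)) : ℝ :=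
  if ‖w‖ ≤ (Real.sqrt (C * Real.log k) + Real.sqrt d) / Δ then
    (2 * π) ^ (-(d : ℝ) / 2) * Real.exp (-Δ ^ 2 * ‖w‖ ^ 2 / 2)
  else 0

/-- The inverse Fourier transform `s(z) = (2π)^(-d/2) ∫ ŝ(w) e^(i⟨z,w⟩) dw` of `ŝ`,
under the convention `f̂(ξ) = (2π)^(-d/2) ∫ f(x) e^(-i⟨ξ,x⟩) dx`. -/
noncomputable def sFun (d k : ℕ) (C Δ : ℝ) (z : EuclideanSpace ℝ (Fin d)) : ℂ :=
  ((2 * π : ℝ) ^ (-(d : ℝ) / 2) : ℝ) *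
    ∫ w : EuclideanSpace ℝ (Fin d),
      (sHat d k C Δ w : ℂ) * Complex.exp ((⟪z, w⟫ : ℝ) * Complex.I)

/-! The untruncated inverse transform of `ŝ` is `γ_Δ̄` itself, so `s - γ_Δ̄` is `(2π)^(-d)` times
the Gaussian Fourier integral over the complement of the truncation ball `‖w‖ ≤ R`, bounded by
the real tail `∫_{‖w‖>R} e^(-b‖w‖²)`, `b = Δ̄²/2`. Writing `bR² = d t²/2`, the Chernoff bound
`e^(-b‖w‖²) ≤ e^(-(b-a)R²) e^(-a‖w‖²)` on `‖w‖ > R` with `a = b/t²`, together with `t ≤ e^(t-1)`,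
shows that this tail is at most the fraction `e^(-d(t-1)²/2)` of the full mass `(π/b)^(d/2)`.
For `t = 1 + √(C ln k)/√d` that fraction is `k^(-C/2)`, and the full mass contributes
`(2πΔ̄²)^(-d/2)`. -/

open Metric

lemma rpow_mul_exp_le_exp_neg_sq {t n : ℝ} (ht : 0 ≤ t) (hn : 0 ≤ n) :
    t ^ n * rexp (n * (1 - t ^ 2) / 2) ≤ rexp (-n * (t - 1) ^ 2 / 2) := by
  have hpow : t ^ n ≤ rexp (n * (t - 1)) := by
    calc t ^ n ≤ rexp (t - 1) ^ n :=
          rpow_le_rpow ht (by linarith [add_one_le_exp (t - 1)]) hn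
      _ = rexp (n * (t - 1)) := by rw [← exp_mul, mul_comm]
  calc t ^ n * rexp (n * (1 - t ^ 2) / 2)
      ≤ rexp (n * (t - 1)) * rexp (n * (1 - t ^ 2) / 2) := by gcongr
    _ = rexp (-n * (t - 1) ^ 2 / 2) := by rw [← exp_add]; ring_nf

section GaussianTail

variable {V : Type*} [NormedAddCommGroup V] [InnerProductSpace ℝ V] [FiniteDimensional ℝ V]
  [MeasurableSpace V] [BorelSpace V]

lemma integrable_exp_neg_mul_sq_norm {b : ℝ} (hb : 0 < b) :
    Integrable fun v : V ↦ rexp (-b * ‖v‖ ^ 2) := by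
  refine Integrable.of_integral_ne_zero ?_
  rw [GaussianFourier.integral_rexp_neg_mul_sq_norm hb]
  positivity

lemma setIntegral_compl_closedBall_exp_neg_mul_sq_norm_le {a b R : ℝ} (ha : 0 < a) (hab : a ≤ b)
    (hR : 0 ≤ R) :
    ∫ v in (closedBall (0 : V) R)ᶜ, rexp (-b * ‖v‖ ^ 2) ≤
      rexp (-(b - a) * R ^ 2) * (π / a) ^ (Module.finrank ℝ V / 2 : ℝ) := by
  have hpoint : ∀ v ∈ (closedBall (0 : V) R)ᶜ,
      rexp (-b * ‖v‖ ^ 2) ≤ rexp (-(b - a) * R ^ 2) * rexp (-a * ‖v‖ ^ 2) := by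
    intro v hv
    have hRv : R ^ 2 ≤ ‖v‖ ^ 2 := by
      rw [Set.mem_compl_iff, mem_closedBall, dist_zero_right, not_le] at hv
      gcongr
    rw [← exp_add]
    gcongr
    nlinarith
  calc ∫ v in (closedBall (0 : V) R)ᶜ, rexp (-b * ‖v‖ ^ 2)
      ≤ ∫ v in (closedBall (0 : V) R)ᶜ, rexp (-(b - a) * R ^ 2) * rexp (-a * ‖v‖ ^ 2) :=
        setIntegral_mono_on (integrable_exp_neg_mul_sq_norm (ha.trans_le hab)).integrableOn
          ((integrable_exp_neg_mul_sq_norm ha).const_mul _).integrableOn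
          measurableSet_closedBall.compl hpoint
    _ ≤ ∫ v, rexp (-(b - a) * R ^ 2) * rexp (-a * ‖v‖ ^ 2) :=
        setIntegral_le_integral ((integrable_exp_neg_mul_sq_norm ha).const_mul _)
          (.of_forall fun _ ↦ by positivity)
    _ = rexp (-(b - a) * R ^ 2) * (π / a) ^ (Module.finrank ℝ V / 2 : ℝ) := by
        rw [integral_const_mul, GaussianFourier.integral_rexp_neg_mul_sq_norm ha]

lemma setIntegral_compl_closedBall_exp_neg_mul_sq_norm_le_exp_neg_sq {b t R : ℝ} (hb : 0 < b)
    (ht : 1 ≤ t) (hR : 0 ≤ R) (hbR : b * R ^ 2 = Module.finrank ℝ V * t ^ 2 / 2) :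
    ∫ v in (closedBall (0 : V) R)ᶜ, rexp (-b * ‖v‖ ^ 2) ≤
      (π / b) ^ (Module.finrank ℝ V / 2 : ℝ) * rexp (-Module.finrank ℝ V * (t - 1) ^ 2 / 2) := by
  set n : ℝ := (Module.finrank ℝ V : ℝ)
  have ht0 : 0 < t := by linarith
  have hn : 0 ≤ n := Nat.cast_nonneg _
  calc ∫ v in (closedBall (0 : V) R)ᶜ, rexp (-b * ‖v‖ ^ 2)
      ≤ rexp (-(b - b / t ^ 2) * R ^ 2) * (π / (b / t ^ 2)) ^ (n / 2) :=
        setIntegral_compl_closedBall_exp_neg_mul_sq_norm_le (by positivity)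
          (div_le_self hb.le (one_le_pow₀ ht)) hR
    _ = (π / b) ^ (n / 2) * (t ^ n * rexp (n * (1 - t ^ 2) / 2)) := by
        have hexp : -(b - b / t ^ 2) * R ^ 2 = n * (1 - t ^ 2) / 2 := by
          rw [show -(b - b / t ^ 2) * R ^ 2 = -(b * R ^ 2) * (1 - 1 / t ^ 2) by ring, hbR]
          field_simp
          ring
        have hpow : (π / (b / t ^ 2)) ^ (n / 2) = (π / b) ^ (n / 2) * t ^ n := by
          rw [div_div_eq_mul_div, mul_div_right_comm, mul_rpow (by positivity) (by positivity),
            ← rpow_natCast, ← rpow_mul ht0.le]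
          ring_nf
        rw [hexp, hpow]
        ring
    _ ≤ (π / b) ^ (n / 2) * rexp (-n * (t - 1) ^ 2 / 2) := by
        gcongr
        exact rpow_mul_exp_le_exp_neg_sq ht0.le hn

end GaussianTail

lemma two_pi_rpow_neg_mul_pi_div_rpow (n : ℝ) {σ : ℝ} (hσ : σ ≠ 0) :
    (2 * π) ^ (-n) * (π / (σ ^ 2 / 2)) ^ (n / 2) = (2 * π * σ ^ 2) ^ (-n / 2) := by
  have h2π : 0 < 2 * π := by positivity
  have hσ2 : 0 < σ ^ 2 := by positivity
  have hsplit : (2 * π) ^ (-n) = ((2 * π) ^ (n / 2))⁻¹ * ((2 * π) ^ (n / 2))⁻¹ := by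
    rw [← mul_inv, ← rpow_add h2π, add_halves, rpow_neg h2π.le]
  rw [hsplit, show π / (σ ^ 2 / 2) = 2 * π / σ ^ 2 by field_simp, div_rpow h2π.le hσ2.le,
    neg_div, rpow_neg (by positivity), mul_rpow h2π.le hσ2.le]
  field_simp

lemma gaussDensity_eq_integral (d : ℕ) {σ : ℝ} (hσ : σ ≠ 0) (z : EuclideanSpace ℝ (Fin d)) :
    (gaussDensity d σ z : ℂ) = ((2 * π) ^ (-(d : ℝ)) : ℝ) *
      ∫ w : EuclideanSpace ℝ (Fin d),
        Complex.exp (-((σ ^ 2 / 2 : ℝ) : ℂ) * ‖w‖ ^ 2 + Complex.I * ⟪z, w⟫) := by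
  have hb : 0 < σ ^ 2 / 2 := by positivity
  rw [GaussianFourier.integral_cexp_neg_mul_sq_norm_add (by rwa [Complex.ofReal_re]),
    finrank_euclideanSpace_fin, gaussDensity, ← two_pi_rpow_neg_mul_pi_div_rpow d hσ]
  have hexp : Complex.I ^ 2 * (‖z‖ : ℂ) ^ 2 / (4 * ((σ ^ 2 / 2 : ℝ) : ℂ)) =
      ((-‖z‖ ^ 2 / (2 * σ ^ 2) : ℝ) : ℂ) := by
    push_cast
    rw [Complex.I_sq]
    field_simp
    ring
  rw [hexp, ← Complex.ofReal_exp, ← Complex.ofReal_div, ← Complex.ofReal_natCast,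
    ← Complex.ofReal_ofNat, ← Complex.ofReal_div, ← Complex.ofReal_cpow (by positivity)]
  push_cast
  ring

lemma sFun_eq_setIntegral (d k : ℕ) (C Δ : ℝ) (z : EuclideanSpace ℝ (Fin d)) :
    sFun d k C Δ z = ((2 * π) ^ (-(d : ℝ)) : ℝ) *
      ∫ w in closedBall 0 ((√(C * Real.log k) + √d) / Δ),
        Complex.exp (-((Δ ^ 2 / 2 : ℝ) : ℂ) * ‖w‖ ^ 2 + Complex.I * ⟪z, w⟫) := by
  classical
  have h2π : 0 < 2 * π := by positivity
  have hintegrand : ∀ w, (sHat d k C Δ w : ℂ) * Complex.exp ((⟪z, w⟫ : ℝ) * Complex.I) =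
      (closedBall 0 ((√(C * Real.log k) + √d) / Δ)).indicator (fun w ↦
        ((2 * π) ^ (-(d : ℝ) / 2) : ℝ) *
          Complex.exp (-((Δ ^ 2 / 2 : ℝ) : ℂ) * ‖w‖ ^ 2 + Complex.I * ⟪z, w⟫)) w := by
    intro w
    rw [sHat, Set.indicator_apply, mem_closedBall, dist_zero_right]
    split_ifs
    · push_cast
      rw [mul_assoc, ← Complex.exp_add]
      ring_nf
    · simp
  rw [sFun, funext hintegrand, integral_indicator measurableSet_closedBall, integral_const_mul,
    ← mul_assoc, ← Complex.ofReal_mul, ← rpow_add h2π,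
    show -(d : ℝ) / 2 + -(d : ℝ) / 2 = -d by ring]

lemma norm_sFun_sub_gaussDensity_le (d k : ℕ) (C : ℝ) {Δ : ℝ} (hΔ : Δ ≠ 0)
    (z : EuclideanSpace ℝ (Fin d)) :
    ‖sFun d k C Δ z - (gaussDensity d Δ z : ℝ)‖ ≤ (2 * π) ^ (-(d : ℝ)) *
      ∫ w in (closedBall (0 : EuclideanSpace ℝ (Fin d)) ((√(C * Real.log k) + √d) / Δ))ᶜ,
        rexp (-(Δ ^ 2 / 2) * ‖w‖ ^ 2) := by
  set B : Set (EuclideanSpace ℝ (Fin d)) := closedBall 0 ((√(C * Real.log k) + √d) / Δ)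
  set f : EuclideanSpace ℝ (Fin d) → ℂ := fun w ↦
    Complex.exp (-((Δ ^ 2 / 2 : ℝ) : ℂ) * ‖w‖ ^ 2 + Complex.I * ⟪z, w⟫)
  have hf : Integrable f :=
    GaussianFourier.integrable_cexp_neg_mul_sq_norm_add (by rw [Complex.ofReal_re]; positivity)
      Complex.I z
  have hnorm : ∀ w, ‖f w‖ = rexp (-(Δ ^ 2 / 2) * ‖w‖ ^ 2) := fun w ↦ by
    rw [Complex.norm_exp]
    congr 1
    simp [← Complex.ofReal_pow]
  have hdiff : sFun d k C Δ z - (gaussDensity d Δ z : ℝ) =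
      -(((2 * π) ^ (-(d : ℝ)) : ℝ) : ℂ) * ∫ w in Bᶜ, f w := by
    rw [sFun_eq_setIntegral, gaussDensity_eq_integral d hΔ,
      ← integral_add_compl measurableSet_closedBall hf]
    ring
  rw [hdiff, norm_mul, norm_neg, Complex.norm_real, Real.norm_of_nonneg (by positivity)]
  gcongr
  exact (norm_integral_le_integral_norm f).trans_eq (by simp_rw [hnorm])

theorem truncated_deconvolution_error_general (d k : ℕ) (hd : 1 ≤ d) (hk : 2 ≤ k)
    (C : ℝ) (hC : 0 < C) (Δ : ℝ) (hΔ : 0 < Δ)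
    (z : EuclideanSpace ℝ (Fin d)) :
    ‖sFun d k C Δ z - (gaussDensity d Δ z : ℝ)‖ ≤
      (2 * π * Δ ^ 2) ^ (-(d : ℝ) / 2) * (k : ℝ) ^ (-C / 2) := by
  have hk0 : (0 : ℝ) < k := by positivity
  have hlog : 0 < Real.log k := Real.log_pos (by exact_mod_cast hk)
  have hsd : 0 < √(d : ℝ) := Real.sqrt_pos.2 (by exact_mod_cast hd)
  set u := √(C * Real.log k)
  have htail := setIntegral_compl_closedBall_exp_neg_mul_sq_norm_le_exp_neg_sq
    (V := EuclideanSpace ℝ (Fin d)) (b := Δ ^ 2 / 2) (t := 1 + u / √d)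
    (R := (u + √d) / Δ) (by positivity) (le_add_of_nonneg_right (by positivity)) (by positivity)
    (by
      rw [finrank_euclideanSpace_fin]
      field_simp
      rw [Real.sq_sqrt (by positivity)]
      ring)
  rw [finrank_euclideanSpace_fin] at htail
  have hdecay : rexp (-d * (1 + u / √d - 1) ^ 2 / 2) = (k : ℝ) ^ (-C / 2) := by
    rw [rpow_def_of_pos hk0, add_sub_cancel_left, div_pow, Real.sq_sqrt (Nat.cast_nonneg d),
      Real.sq_sqrt (by positivity)]
    congr 1
    field_simp
  calc ‖sFun d k C Δ z - (gaussDensity d Δ z : ℝ)‖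
      ≤ (2 * π) ^ (-(d : ℝ)) * ((π / (Δ ^ 2 / 2)) ^ ((d : ℝ) / 2) *
          rexp (-d * (1 + u / √d - 1) ^ 2 / 2)) :=
        (norm_sFun_sub_gaussDensity_le d k C hΔ.ne' z).trans (by gcongr)
    _ = (2 * π * Δ ^ 2) ^ (-(d : ℝ) / 2) * (k : ℝ) ^ (-C / 2) := by
        rw [← mul_assoc, two_pi_rpow_neg_mul_pi_div_rpow _ hΔ.ne', hdecay]

/-- With `ŝ` the truncation of the Fourier transform of `γ_{Δ̄}` to the ball of
radius `(√(C ln k)+√d)/Δ̄` and `s` its inverse Fourier transform, for all `z ∈ ℝ^d`,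
`|s(z) − γ_{Δ̄}(z)| ≤ (2πΔ̄²)^(-d/2)·k^(-C/2)`. -/
theorem truncated_deconvolution_error (d k : ℕ) (hd : 1 ≤ d) (hk : 2 ≤ k)
    (C : ℝ) (hC : 0 < C) (Δ : ℝ) (hΔ : 0 < Δ) (hΔ1 : Δ < 1)
    (z : EuclideanSpace ℝ (Fin d)) :
    ‖sFun d k C Δ z - (gaussDensity d Δ z : ℝ)‖ ≤
      (2 * π * Δ ^ 2) ^ (-(d : ℝ) / 2) * (k : ℝ) ^ (-C / 2) :=
  truncated_deconvolution_error_general d k hd hk C hC Δ hΔ z
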